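/- arXiv:2603.28748 — 2 statements merged into one kernel-verified Lean document; each statement's English description precedes it below -/
import Mathlib

section
/- Let G and H be graphs with odd Hadwiger numbers oh(G) = s ≥ 2 and oh(H) = t ≥ 2. Then the odd Hadwiger number of the strong product satisfies oh(G ⊠ H) ≥ s·t. -/
/-!
If `K` is an odd minor of `G` with trees `T_i` and `L` one of `H` with trees `S_j`, then `K ⊠ L` is
an odd minor of `G ⊠ H`: the branch set of `(i, j)` is `T_i × S_j`, made into a tree by keeping
every row `T_i × {w}` and a single column `{v_i} × S_j`, and coloured by the sum of the two
colourings. An edge of `K ⊠ L` changing only `j` is realised inside the common column, one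
changing only `i` along a row, and one changing both by a diagonal edge; all three are
monochromatic. Since `K_s ⊠ K_t = K_{st}`, this gives `oh(G ⊠ H) ≥ oh(G) · oh(H)`.
-/

open SimpleGraph

/-- `H` is an odd minor of `G`: there are pairwise vertex-disjoint subtrees of `G`, one for
each vertex of `H`, and a 2-colouring of the vertices which is proper on each tree, such that
for every edge of `H` there is a monochromatic edge of `G` between the corresponding trees. -/
def IsOddMinorOf {W V : Type*} (H : SimpleGraph W) (G : SimpleGraph V) : Prop :=
  ∃ (T : W → G.Subgraph) (c : V → Fin 2),
    (∀ w, (T w).coe.IsTree) ∧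
    (Pairwise fun w w' => Disjoint (T w).verts (T w').verts) ∧
    (∀ w, ∀ x y, (T w).Adj x y → c x ≠ c y) ∧
    (∀ w w', H.Adj w w' →
      ∃ x y, x ∈ (T w).verts ∧ y ∈ (T w').verts ∧ G.Adj x y ∧ c x = c y)

/-- The odd Hadwiger number of `G`: the largest `r` such that `K_r` is an odd minor of `G`. -/
noncomputable def oddHadwiger {V : Type*} [Fintype V] (G : SimpleGraph V) : ℕ :=
  sSup {r : ℕ | IsOddMinorOf (⊤ : SimpleGraph (Fin r)) G}

/-- The Cartesian product `G □ H`. -/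
def cartProd {α β : Type*} (G : SimpleGraph α) (H : SimpleGraph β) : SimpleGraph (α × β) where
  Adj x y := (x.1 = y.1 ∧ H.Adj x.2 y.2) ∨ (x.2 = y.2 ∧ G.Adj x.1 y.1)
  symm := by
    constructor
    rintro x y (⟨h1, h2⟩ | ⟨h1, h2⟩)
    · exact Or.inl ⟨h1.symm, h2.symm⟩
    · exact Or.inr ⟨h1.symm, h2.symm⟩
  loopless := by
    constructor
    rintro x (⟨_, h⟩ | ⟨_, h⟩)
    · exact H.irrefl h
    · exact G.irrefl h

/-- The strong product `G ⊠ H`. -/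
def strongProd {α β : Type*} (G : SimpleGraph α) (H : SimpleGraph β) : SimpleGraph (α × β) where
  Adj x y := (x.1 = y.1 ∧ H.Adj x.2 y.2) ∨ (x.2 = y.2 ∧ G.Adj x.1 y.1) ∨
    (G.Adj x.1 y.1 ∧ H.Adj x.2 y.2)
  symm := by
    constructor
    rintro x y (⟨h1, h2⟩ | ⟨h1, h2⟩ | ⟨h1, h2⟩)
    · exact Or.inl ⟨h1.symm, h2.symm⟩
    · exact Or.inr (Or.inl ⟨h1.symm, h2.symm⟩)
    · exact Or.inr (Or.inr ⟨h1.symm, h2.symm⟩)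
  loopless := by
    constructor
    rintro x (⟨_, h⟩ | ⟨_, h⟩ | ⟨h, _⟩)
    · exact H.irrefl h
    · exact G.irrefl h
    · exact G.irrefl h

/-- The lexicographic product `G ∘ H`. -/
def lexProd {α β : Type*} (G : SimpleGraph α) (H : SimpleGraph β) : SimpleGraph (α × β) where
  Adj x y := G.Adj x.1 y.1 ∨ (x.1 = y.1 ∧ H.Adj x.2 y.2)
  symm := by
    constructor
    rintro x y (h | ⟨h1, h2⟩)
    · exact Or.inl h.symm
    · exact Or.inr ⟨h1.symm, h2.symm⟩
  loopless := by
    constructor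
    rintro x (h | ⟨_, h⟩)
    · exact G.irrefl h
    · exact H.irrefl h

/-- The direct (tensor) product `G × H`. -/
def dirProd {α β : Type*} (G : SimpleGraph α) (H : SimpleGraph β) : SimpleGraph (α × β) where
  Adj x y := G.Adj x.1 y.1 ∧ H.Adj x.2 y.2
  symm := by
    constructor
    rintro x y ⟨h1, h2⟩
    exact ⟨h1.symm, h2.symm⟩
  loopless := by
    constructor
    rintro x ⟨h, _⟩
    exact G.irrefl h

namespace SimpleGraph

variable {V α β : Type*}

structure IsParentMap (G : SimpleGraph V) (r : V) (par : V → V) (ht : V → ℕ) : Prop where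
  height_lt : ∀ v, v ≠ r → ht (par v) < ht v
  adj_iff : ∀ v w, G.Adj v w ↔ (v ≠ r ∧ w = par v) ∨ (w ≠ r ∧ v = par w)

namespace IsParentMap

variable {G : SimpleGraph V} {r : V} {par : V → V} {ht : V → ℕ}

theorem reachable_root (h : G.IsParentMap r par ht) (v : V) : G.Reachable v r := by
  induction v using (measure ht).wf.induction with
  | h v ih =>
    by_cases hv : v = r
    · exact hv ▸ Reachable.refl _
    · exact ((h.adj_iff v (par v)).2 (Or.inl ⟨hv, rfl⟩)).reachable.trans (ih _ (h.height_lt v hv))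

theorem isTree (h : G.IsParentMap r par ht) : G.IsTree := by
  classical
  refine ⟨(connected_iff_exists_forall_reachable G).2 ⟨r, fun v => (h.reachable_root v).symm⟩,
    fun v c hc => ?_⟩
  obtain ⟨u, hu, hmax⟩ := c.support.toFinset.exists_max_image ht ⟨v, by simp⟩
  rw [List.mem_toFinset] at hu
  have hc' := (Walk.isCycle_rotate hu).2 hc
  -- `u` has maximal height on the cycle, so both of its neighbours there must be `par u`.
  have eq_par : ∀ a ∈ (c.rotate u hu).support, G.Adj u a → a = par u := by
    intro a ha hua
    rcases (h.adj_iff u a).1 hua with ⟨-, rfl⟩ | ⟨har, rfl⟩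
    · rfl
    · have := hmax a (by simpa using ha)
      exact absurd (h.height_lt a har) (by omega)
  exact hc'.snd_ne_penultimate <|
    (eq_par _ (Walk.getVert_mem_support _ _) (Walk.adj_snd hc'.not_nil)).trans
      (eq_par _ (Walk.getVert_mem_support _ _) (Walk.adj_penultimate hc'.not_nil).symm).symm

end IsParentMap

theorem IsTree.exists_isParentMap {G : SimpleGraph V} (hG : G.IsTree) (r : V) :
    ∃ par ht, G.IsParentMap r par ht := by
  classical
  choose P hP hPu using fun v => hG.existsUnique_path v r
  have length_lt (v w : V) (hvw : v ≠ w) (hv : v ∈ (P w).support) :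
      (P v).length < (P w).length := by
    rw [← hPu v _ ((hP w).dropUntil hv)]
    exact Walk.length_dropUntil_lt_length hv hvw
  have of_not_mem (v w : V) (hvw : G.Adj v w) (hv : v ∉ (P w).support) :
      v ≠ r ∧ w = (P v).snd := by
    refine ⟨fun hvr => hv (hvr ▸ (P w).end_mem_support), ?_⟩
    rw [← hPu v _ ((hP w).cons hv (h := hvw)), Walk.snd_cons]
  refine ⟨fun v => (P v).snd, fun v => (P v).length, fun v hv => ?_, fun v w => ⟨fun hvw => ?_, ?_⟩⟩
  · rw [← hPu _ _ (hP v).tail, ← Walk.length_tail_add_one (Walk.not_nil_of_ne hv)]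
    omega
  · by_cases hv : v ∈ (P w).support
    · by_cases hw : w ∈ (P v).support
      · exact absurd (length_lt v w (G.ne_of_adj hvw) hv)
          (length_lt w v (G.ne_of_adj hvw).symm hw).not_gt
      · exact Or.inr (of_not_mem w v hvw.symm hw)
    · exact Or.inl (of_not_mem v w hvw hv)
  · rintro (⟨hv, rfl⟩ | ⟨hw, rfl⟩)
    · exact Walk.adj_snd (Walk.not_nil_of_ne hv)
    · exact (Walk.adj_snd (Walk.not_nil_of_ne hw)).symm

def combGraph (A : SimpleGraph α) (B : SimpleGraph β) (a₀ : α) : SimpleGraph (α × β) where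
  Adj p q := (p.2 = q.2 ∧ A.Adj p.1 q.1) ∨ (p.1 = q.1 ∧ p.1 = a₀ ∧ B.Adj p.2 q.2)
  symm := ⟨fun p q => by
    rintro (⟨h, hA⟩ | ⟨h, rfl, hB⟩)
    exacts [Or.inl ⟨h.symm, hA.symm⟩, Or.inr ⟨h.symm, h.symm, hB.symm⟩]⟩
  loopless := ⟨fun p => by rintro (⟨-, h⟩ | ⟨-, -, h⟩); exacts [A.irrefl h, B.irrefl h]⟩

theorem IsParentMap.combGraph [DecidableEq α] {A : SimpleGraph α} {B : SimpleGraph β}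
    {a₀ : α} {b₀ : β} {parA : α → α} {parB : β → β} {htA : α → ℕ} {htB : β → ℕ}
    (hA : A.IsParentMap a₀ parA htA) (hB : B.IsParentMap b₀ parB htB) :
    (combGraph A B a₀).IsParentMap (a₀, b₀)
      (fun p => if p.1 = a₀ then (a₀, parB p.2) else (parA p.1, p.2))
      (fun p => htA p.1 + htB p.2) where
  height_lt := by
    rintro ⟨a, b⟩ hab
    by_cases ha : a = a₀
    · subst ha
      have := hB.height_lt b fun hb => hab (hb ▸ rfl)
      simp only [↓reduceIte]
      omega
    · have := hA.height_lt a ha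
      simp only [ha, ↓reduceIte]
      omega
  adj_iff := by
    rintro ⟨a, b⟩ ⟨a', b'⟩
    simp only [SimpleGraph.combGraph, hA.adj_iff, hB.adj_iff]
    grind

theorem IsTree.combGraph {A : SimpleGraph α} {B : SimpleGraph β} (hA : A.IsTree)
    (hB : B.IsTree) (a₀ : α) : (combGraph A B a₀).IsTree := by
  classical
  obtain ⟨b₀⟩ := hB.connected.nonempty
  obtain ⟨_, _, hA'⟩ := hA.exists_isParentMap a₀
  obtain ⟨_, _, hB'⟩ := hB.exists_isParentMap b₀
  exact (hA'.combGraph hB').isTree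

end SimpleGraph

section

variable {V W V' W' : Type*} {G : SimpleGraph V} {H : SimpleGraph W}

def SimpleGraph.Subgraph.comb (T : G.Subgraph) (S : H.Subgraph) (v₀ : T.verts) :
    (strongProd G H).Subgraph where
  verts := T.verts ×ˢ S.verts
  Adj p q := (p.2 = q.2 ∧ p.2 ∈ S.verts ∧ T.Adj p.1 q.1) ∨
    (p.1 = q.1 ∧ p.1 = v₀ ∧ S.Adj p.2 q.2)
  adj_sub := by
    rintro p q (⟨h, -, hT⟩ | ⟨h, -, hS⟩)
    exacts [Or.inr (Or.inl ⟨h, T.adj_sub hT⟩), Or.inl ⟨h, S.adj_sub hS⟩]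
  edge_vert := by
    rintro p q (⟨-, hw, hT⟩ | ⟨-, hv, hS⟩)
    exacts [⟨T.edge_vert hT, hw⟩, ⟨hv ▸ v₀.2, S.edge_vert hS⟩]
  symm := ⟨fun p q => by
    rintro (⟨h, hw, hT⟩ | ⟨h, hv, hS⟩)
    exacts [Or.inl ⟨h.symm, h ▸ hw, hT.symm⟩, Or.inr ⟨h.symm, h ▸ hv, hS.symm⟩]⟩

theorem SimpleGraph.IsTree.coe_comb {T : G.Subgraph} {S : H.Subgraph} (hT : T.coe.IsTree)
    (hS : S.coe.IsTree) (v₀ : T.verts) : (T.comb S v₀).coe.IsTree := by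
  refine (Iso.isTree_iff ⟨Equiv.Set.prod T.verts S.verts, ?_⟩).2 (hT.combGraph hS v₀)
  rintro ⟨⟨v, w⟩, hv, hw⟩ ⟨⟨v', w'⟩, hv', hw'⟩
  change ((⟨w, hw⟩ : S.verts) = ⟨w', hw'⟩ ∧ T.Adj v v') ∨
    ((⟨v, hv⟩ : T.verts) = ⟨v', hv'⟩ ∧ (⟨v, hv⟩ : T.verts) = v₀ ∧ S.Adj w w') ↔ _
  simp [Subgraph.comb, Subtype.ext_iff, hw]

namespace IsOddMinorOf

variable {K : SimpleGraph V'} {L : SimpleGraph W'}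

theorem strongProd (hK : IsOddMinorOf K G) (hL : IsOddMinorOf L H) :
    IsOddMinorOf (strongProd K L) (strongProd G H) := by
  obtain ⟨T, c, hT, hT_disj, hc, hT_edge⟩ := hK
  obtain ⟨S, d, hS, hS_disj, hd, hS_edge⟩ := hL
  let v₀ i : (T i).verts := (hT i).connected.nonempty.some
  let w₀ j : (S j).verts := (hS j).connected.nonempty.some
  refine ⟨fun k => (T k.1).comb (S k.2) (v₀ k.1), fun p => c p.1 + d p.2,
    fun k => (hT k.1).coe_comb (hS k.2) _, ?_, ?_, ?_⟩
  · rintro ⟨i, j⟩ ⟨i', j'⟩ hk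
    rw [Ne, Prod.mk.injEq, not_and_or] at hk
    exact Set.disjoint_prod.2 (hk.imp (hT_disj ·) (hS_disj ·))
  · rintro ⟨i, j⟩ ⟨v, w⟩ ⟨v', w'⟩ (⟨rfl, -, h⟩ | ⟨rfl, -, h⟩) hcd
    exacts [hc i v v' h (add_right_cancel hcd), hd j w w' h (add_left_cancel hcd)]
  · rintro ⟨i, j⟩ ⟨i', j'⟩ (⟨rfl, hjj⟩ | ⟨rfl, hii⟩ | ⟨hii, hjj⟩)
    · obtain ⟨w, w', hw, hw', hww, hdw⟩ := hS_edge j j' hjj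
      exact ⟨(v₀ i, w), (v₀ i, w'), ⟨(v₀ i).2, hw⟩, ⟨(v₀ i).2, hw'⟩, Or.inl ⟨rfl, hww⟩,
        congrArg (c _ + ·) hdw⟩
    · obtain ⟨v, v', hv, hv', hvv, hcv⟩ := hT_edge i i' hii
      exact ⟨(v, w₀ j), (v', w₀ j), ⟨hv, (w₀ j).2⟩, ⟨hv', (w₀ j).2⟩, Or.inr (Or.inl ⟨rfl, hvv⟩),
        congrArg (· + d _) hcv⟩
    · obtain ⟨v, v', hv, hv', hvv, hcv⟩ := hT_edge i i' hii
      obtain ⟨w, w', hw, hw', hww, hdw⟩ := hS_edge j j' hjj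
      exact ⟨(v, w), (v', w'), ⟨hv, hw⟩, ⟨hv', hw'⟩, Or.inr (Or.inr ⟨hvv, hww⟩),
        congrArg₂ (· + ·) hcv hdw⟩

theorem comap (h : IsOddMinorOf H G) (f : K ↪g H) : IsOddMinorOf K G := by
  obtain ⟨T, c, hT, hT_disj, hc, hT_edge⟩ := h
  exact ⟨T ∘ f, c, (hT <| f ·), fun _ _ hk => hT_disj (f.injective.ne hk), (hc <| f ·),
    fun _ _ hk => hT_edge _ _ (f.map_rel_iff.2 hk)⟩

theorem of_isEmpty [IsEmpty W] (H : SimpleGraph W) (G : SimpleGraph V) : IsOddMinorOf H G :=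
  ⟨isEmptyElim, fun _ => 0, isEmptyElim, isEmptyElim, isEmptyElim, isEmptyElim⟩

theorem card_le [Finite V] (h : IsOddMinorOf H G) : Nat.card W ≤ Nat.card V := by
  obtain ⟨T, -, hT, hT_disj, -, -⟩ := h
  let v w : (T w).verts := (hT w).connected.nonempty.some
  refine Nat.card_le_card_of_injective (fun w => (v w).1) fun w w' (hww : (v w).1 = (v w').1) => ?_
  by_contra hne
  exact Set.disjoint_left.1 (hT_disj hne) (v w).2 (hww ▸ (v w').2)

end IsOddMinorOf

theorem strongProd_top : strongProd (⊤ : SimpleGraph V) (⊤ : SimpleGraph W) = ⊤ := by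
  ext ⟨v, w⟩ ⟨v', w'⟩
  simp only [strongProd, top_adj, ne_eq, Prod.mk.injEq]
  tauto

theorem bddAbove_isOddMinorOf_top [Finite V] (G : SimpleGraph V) :
    BddAbove {r | IsOddMinorOf (⊤ : SimpleGraph (Fin r)) G} :=
  ⟨Nat.card V, fun r h => by simpa using h.card_le⟩

theorem isOddMinorOf_oddHadwiger [Fintype V] (G : SimpleGraph V) :
    IsOddMinorOf (⊤ : SimpleGraph (Fin (oddHadwiger G))) G :=
  Nat.sSup_mem ⟨0, .of_isEmpty _ G⟩ (bddAbove_isOddMinorOf_top G)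

theorem le_oddHadwiger [Fintype V] {r : ℕ} (h : IsOddMinorOf (⊤ : SimpleGraph (Fin r)) G) :
    r ≤ oddHadwiger G :=
  le_csSup (bddAbove_isOddMinorOf_top G) h

end

theorem stmt_3_general {V W : Type*} [Fintype V] [Fintype W]
    (G : SimpleGraph V) (H : SimpleGraph W) (s t : ℕ)
    (hs : oddHadwiger G = s)
    (ht : oddHadwiger H = t) :
    oddHadwiger (strongProd G H) ≥ s * t := by
  subst hs ht
  have h := (isOddMinorOf_oddHadwiger G).strongProd (isOddMinorOf_oddHadwiger H)
  rw [strongProd_top] at h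
  exact le_oddHadwiger (h.comap (Iso.completeGraph finProdFinEquiv.symm).toEmbedding)

theorem stmt_3 {V W : Type*} [Fintype V] [Fintype W]
    (G : SimpleGraph V) (H : SimpleGraph W) (s t : ℕ)
    (hs : oddHadwiger G = s) (hs2 : 2 ≤ s)
    (ht : oddHadwiger H = t) (ht2 : 2 ≤ t) :
    oddHadwiger (strongProd G H) ≥ s * t :=
  stmt_3_general G H s t hs ht
end

section
/- Let G and H be (finite, nonempty) graphs with maximum degrees Δ(G) and Δ(H). If Δ(G) = Δ(H), then the odd Hadwiger number of the strong product satisfies oh(G ⊠ H) ≥ Δ(G) + 1; if Δ(G) ≠ Δ(H), then oh(G ⊠ H) ≥ min{Δ(G), Δ(H)} + 2. -/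
open SimpleGraph

/-!
Let `g` and `h` be vertices of maximum degree in `G` and `H`, and `k = min Δ(G) Δ(H)`. Pair up
neighbours `g₁, …, g_k` of `g` with neighbours `h₁, …, h_k` of `h`, and take as branch set `i`
the path `(gᵢ, h) – (gᵢ, hᵢ) – (g, hᵢ)`. Colour a vertex `0` if it lies on the cross
`{g} × W ∪ V × {h}` and `1` otherwise: every path is properly coloured, and two paths `i ≠ j`
are joined by the monochromatic diagonal edge `(gᵢ, h)(g, hⱼ)`. The single vertex `(g, h)` is one
more branch set, and when `Δ(G) < Δ(H)` so is `(g, w)` for a neighbour `w` of `h` left unused;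
the case `Δ(G) > Δ(H)` follows from the symmetry of `⊠`.
-/

namespace SimpleGraph

variable {V : Type*} (G : SimpleGraph V)

def starSubgraph (r : V) (L : Set V) (hL : L ⊆ G.neighborSet r) : G.Subgraph where
  verts := insert r L
  Adj x y := (x = r ∧ y ∈ L) ∨ (y = r ∧ x ∈ L)
  adj_sub := by
    rintro x y (⟨rfl, hy⟩ | ⟨rfl, hx⟩)
    · exact hL hy
    · exact (hL hx).symm
  edge_vert := by
    rintro x y (⟨rfl, -⟩ | ⟨-, hx⟩)
    · exact Set.mem_insert _ _
    · exact Set.mem_insert_of_mem _ hx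
  symm := ⟨fun _ _ => Or.symm⟩

variable {G}

theorem coe_starSubgraph {r : V} {L : Set V} (hL : L ⊆ G.neighborSet r) :
    (G.starSubgraph r L hL).coe = starGraph ⟨r, Set.mem_insert r L⟩ := by
  have hr : r ∉ L := fun h => G.loopless.irrefl r (hL h)
  ext ⟨x, hx | hx⟩ ⟨y, hy | hy⟩ <;> simp [starSubgraph] <;> grind

theorem isTree_coe_starSubgraph {r : V} {L : Set V} (hL : L ⊆ G.neighborSet r) :
    (G.starSubgraph r L hL).coe.IsTree :=
  coe_starSubgraph hL ▸ isTree_starGraph _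

theorem exists_fin_embedding_adj_of_le_degree [Fintype V] [DecidableRel G.Adj] {v : V} {k : ℕ}
    (hk : k ≤ G.degree v) : ∃ f : Fin k ↪ V, ∀ i, G.Adj v (f i) := by
  obtain ⟨f⟩ := Function.Embedding.nonempty_of_card_le
    (α := Fin k) (β := G.neighborSet v) (by rwa [Fintype.card_fin, card_neighborSet_eq_degree])
  exact ⟨f.trans (Function.Embedding.subtype _), fun i => (f i).2⟩

end SimpleGraph

section OddMinor

variable {U U' V V' : Type*} {F : SimpleGraph U} {F' : SimpleGraph U'} {G : SimpleGraph V}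
  {G' : SimpleGraph V'}

theorem IsOddMinorOf.copy_trans (f : Copy F' F) (h : IsOddMinorOf F G) : IsOddMinorOf F' G := by
  obtain ⟨T, c, hT, hdisj, hc, hedge⟩ := h
  exact ⟨T ∘ f, c, fun w => hT (f w), hdisj.comp_of_injective f.injective, fun w => hc (f w),
    fun w w' hw => hedge _ _ (f.toHom.map_adj hw)⟩

theorem IsOddMinorOf.trans_copy (h : IsOddMinorOf F G) (f : Copy G G') : IsOddMinorOf F G' := by
  obtain ⟨T, c, hT, hdisj, hc, hedge⟩ := h
  refine ⟨fun w => (T w).map f.toHom, Function.extend f.toHom c 0, fun w => ?_, fun w w' hw => ?_,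
    fun w => ?_, fun w w' hw => ?_⟩
  · exact (f.isoSubgraphMap (T w)).isTree_iff.mp (hT w)
  · exact (hdisj hw).image f.injective.injOn (Set.subset_univ _) (Set.subset_univ _)
  · rintro _ _ ⟨x, y, hxy, rfl, rfl⟩
    rw [f.injective.extend_apply, f.injective.extend_apply]
    exact hc w x y hxy
  · obtain ⟨x, y, hx, hy, hxy, hcxy⟩ := hedge w w' hw
    exact ⟨f.toHom x, f.toHom y, ⟨x, hx, rfl⟩, ⟨y, hy, rfl⟩, f.toHom.map_adj hxy,
      by rw [f.injective.extend_apply, f.injective.extend_apply, hcxy]⟩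

theorem IsOddMinorOf.card_le_s6 [Fintype U] [Fintype V] (h : IsOddMinorOf F G) :
    Fintype.card U ≤ Fintype.card V := by
  obtain ⟨T, -, hT, hdisj, -, -⟩ := h
  let f w : (T w).verts := (hT w).connected.nonempty.some
  refine Fintype.card_le_of_injective (fun w => (f w).1) fun w w' hww' => ?_
  by_contra hne
  have hfw : (f w : V) ∈ (T w').verts := by
    rw [show (f w : V) = f w' from hww']
    exact (f w').2
  exact Set.disjoint_left.mp (hdisj hne) (f w).2 hfw

theorem IsOddMinorOf.card_le_oddHadwiger [Fintype U] [Fintype V]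
    (h : IsOddMinorOf (⊤ : SimpleGraph U) G) : Fintype.card U ≤ oddHadwiger G := by
  refine le_csSup ⟨Fintype.card V, fun r hr => by simpa using hr.card_le_s6⟩ ?_
  exact IsOddMinorOf.copy_trans
    (Embedding.completeGraph (Fintype.equivFin U).symm.toEmbedding).toCopy h

theorem oddHadwiger_le_of_copy [Fintype V] [Fintype V'] (f : Copy G G') :
    oddHadwiger G ≤ oddHadwiger G' :=
  csSup_le' fun r hr => by simpa using (hr.trans_copy f).card_le_oddHadwiger

end OddMinor

section StrongProduct

variable {V W : Type*} {G : SimpleGraph V} {H : SimpleGraph W}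

@[simp]
theorem strongProd_adj {x y : V × W} :
    (strongProd G H).Adj x y ↔ (x.1 = y.1 ∧ H.Adj x.2 y.2) ∨ (x.2 = y.2 ∧ G.Adj x.1 y.1) ∨
      (G.Adj x.1 y.1 ∧ H.Adj x.2 y.2) :=
  Iff.rfl

def strongProdComm (G : SimpleGraph V) (H : SimpleGraph W) : strongProd G H ≃g strongProd H G where
  toEquiv := Equiv.prodComm V W
  map_rel_iff' := by
    simp only [Equiv.prodComm_apply, strongProd_adj, Prod.fst_swap, Prod.snd_swap]
    tauto

theorem isOddMinorOf_top_strongProd {ι κ : Type*} {g : V} {h : W} {gs : ι → V} {hs : ι → W}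
    {ws : κ → W} (hgs : ∀ i, G.Adj g (gs i)) (hhs : ∀ i, H.Adj h (hs i))
    (hgs_inj : gs.Injective) (hhs_inj : hs.Injective)
    (hws : ∀ j, ws j = h ∨ H.Adj h (ws j)) (hws_clique : Pairwise fun j j' => H.Adj (ws j) (ws j'))
    (hws_hs : ∀ i j, ws j ≠ hs i) :
    IsOddMinorOf (⊤ : SimpleGraph (ι ⊕ κ)) (strongProd G H) := by
  classical
  have hg : ∀ i, g ≠ gs i := fun i => (hgs i).ne
  have hh : ∀ i, h ≠ hs i := fun i => (hhs i).ne
  have hws_inj : ws.Injective := fun j j' e => by_contra fun hne => (hws_clique hne).ne e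
  have hleaves : ∀ i, {(gs i, h), (g, hs i)} ⊆ (strongProd G H).neighborSet (gs i, hs i) :=
    fun i => by simp [Set.insert_subset_iff, (hhs i).symm, (hgs i).symm]
  have hcorner : ∀ i j, (strongProd G H).Adj (gs i, h) (g, ws j) := fun i j => by
    rcases hws j with e | e <;> simp [e, (hgs i).symm]
  let T : ι ⊕ κ → (strongProd G H).Subgraph :=
    Sum.elim (fun i => (strongProd G H).starSubgraph (gs i, hs i) _ (hleaves i))
      fun j => (strongProd G H).singletonSubgraph (g, ws j)
  have hT_inl : ∀ i, (T (.inl i)).verts = {(gs i, hs i), (gs i, h), (g, hs i)} := fun _ => rfl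
  have hT_inr : ∀ j, (T (.inr j)).verts = {(g, ws j)} := fun _ => rfl
  let c : V × W → Fin 2 := fun x => if x.1 = g ∨ x.2 = h then 0 else 1
  refine ⟨T, c, ?_, ?_, ?_, ?_⟩
  · rintro (i | j)
    · exact isTree_coe_starSubgraph (hleaves i)
    · exact IsTree.coe_singletonSubgraph _ _
  · rintro (i | j) (i' | j') hne <;>
      simp only [hT_inl, hT_inr, Set.disjoint_left, Set.mem_insert_iff, Set.mem_singleton_iff] <;>
      grind
  · rintro (i | j) x y hxy
    · have hc : ∀ x ∈ ({(gs i, h), (g, hs i)} : Set (V × W)), c x ≠ c (gs i, hs i) := by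
        simp [c, hg i, hh i, Ne.symm]
      rcases hxy with ⟨rfl, hy⟩ | ⟨rfl, hx⟩
      · exact (hc y hy).symm
      · exact hc x hx
    · exact hxy.elim
  · rintro (i | j) (i' | j') hne
    · exact ⟨(gs i, h), (g, hs i'), by simp [hT_inl], by simp [hT_inl],
        by simp [(hgs i).symm, hhs i'], by simp [c]⟩
    · exact ⟨(gs i, h), (g, ws j'), by simp [hT_inl], by simp [hT_inr], hcorner i j', by simp [c]⟩
    · exact ⟨(g, ws j), (gs i', h), by simp [hT_inr], by simp [hT_inl], (hcorner i' j).symm,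
        by simp [c]⟩
    · exact ⟨(g, ws j), (g, ws j'), by simp [hT_inr], by simp [hT_inr],
        by simp [hws_clique fun e => hne.ne (congrArg Sum.inr e)], by simp [c]⟩

end StrongProduct

section Degree

variable {V W : Type*} [Fintype V] [Fintype W] {G : SimpleGraph V} {H : SimpleGraph W}
  [DecidableRel G.Adj] [DecidableRel H.Adj] {g : V} {h : W} {k : ℕ}

theorem add_one_le_oddHadwiger_strongProd (hg : k ≤ G.degree g) (hh : k ≤ H.degree h) :
    k + 1 ≤ oddHadwiger (strongProd G H) := by
  obtain ⟨gs, hgs⟩ := exists_fin_embedding_adj_of_le_degree hg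
  obtain ⟨hs, hhs⟩ := exists_fin_embedding_adj_of_le_degree hh
  have := isOddMinorOf_top_strongProd (ws := fun _ : Unit => h) hgs hhs gs.injective hs.injective
    (fun _ => Or.inl rfl) Subsingleton.pairwise (fun i _ => (hhs i).ne)
  simpa using this.card_le_oddHadwiger

theorem add_two_le_oddHadwiger_strongProd (hg : k ≤ G.degree g) (hh : k + 1 ≤ H.degree h) :
    k + 2 ≤ oddHadwiger (strongProd G H) := by
  obtain ⟨gs, hgs⟩ := exists_fin_embedding_adj_of_le_degree hg
  obtain ⟨hs, hhs⟩ := exists_fin_embedding_adj_of_le_degree hh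
  have := isOddMinorOf_top_strongProd (hs := hs ∘ Fin.castSucc) (ws := ![h, hs (Fin.last k)])
    hgs (fun i => hhs _) gs.injective (hs.injective.comp (Fin.castSucc_injective k))
    (Fin.forall_fin_two.mpr ⟨Or.inl rfl, Or.inr (hhs _)⟩)
    (fun j j' hne => by
      fin_cases j <;> fin_cases j' <;> simp_all [hhs (Fin.last k), (hhs _).symm])
    (fun i => Fin.forall_fin_two.mpr ⟨(hhs _).ne, hs.injective.ne (Fin.castSucc_lt_last i).ne'⟩)
  simpa using this.card_le_oddHadwiger

end Degree

theorem stmt_6 {V W : Type*} [Fintype V] [Fintype W] [Nonempty V] [Nonempty W]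
    (G : SimpleGraph V) (H : SimpleGraph W)
    [DecidableRel G.Adj] [DecidableRel H.Adj] :
    (G.maxDegree = H.maxDegree → oddHadwiger (strongProd G H) ≥ G.maxDegree + 1) ∧
    (G.maxDegree ≠ H.maxDegree →
      oddHadwiger (strongProd G H) ≥ min G.maxDegree H.maxDegree + 2) := by
  obtain ⟨g, hg⟩ := G.exists_maximal_degree_vertex
  obtain ⟨h, hh⟩ := H.exists_maximal_degree_vertex
  refine ⟨fun heq => add_one_le_oddHadwiger_strongProd hg.le (heq ▸ hh.le), fun hne => ?_⟩
  rcases hne.lt_or_gt with hlt | hlt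
  · rw [min_eq_left hlt.le]
    exact add_two_le_oddHadwiger_strongProd hg.le (hh ▸ hlt)
  · rw [min_eq_right hlt.le]
    exact (add_two_le_oddHadwiger_strongProd hh.le (hg ▸ hlt)).trans
      (oddHadwiger_le_of_copy (strongProdComm H G).toCopy)
end
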